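/- Let n ≥ 1, a : Fin n → ℝ and b ∈ ℝ with a i > 0 for all i and b > 0. Let λ, μ ∈ ℝ satisfy -b < λ < a i for all i, -b < μ < a i for all i, and μ ≠ 0. Define f_λ on ℝ^{n+1} by multiplying x_i by Real.sqrt ((a i - λ)/(a i)) for i ≥ 1 and x₀ by Real.sqrt ((b + λ)/b). If x ∈ ℝ^{n+1} satisfies q(x) = ∑_{i=1}^n (x i)^2/a i - (x 0)^2/b = 0 and q_μ(x) = ∑_{i=1}^n (x i)^2/(a i - μ) - (x 0)^2/(b + μ) = 0, then q_μ(f_λ x) = 0. (Points x ∈ E and f_λ(x) ∈ E_λ lie on the same spherical quadrics confocal to E; this rests on the linear relation (λ/μ) q + (1 - λ/μ) q_μ = q_μ ∘ f_λ.) -/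

import Mathlib

/-! The quadratic forms `q_t` are linear in the squared coordinates, and `f_λ` multiplies the
squares by `(a_i - λ)/a_i` and `(b + λ)/b`. By partial fractions
`(a - λ)/(a (a - μ)) = (λ/μ)/a + (1 - λ/μ)/(a - μ)`, and likewise for `b`, so
`q_μ ∘ f_λ = (λ/μ) q + (1 - λ/μ) q_μ`, which vanishes wherever `q` and `q_μ` do. -/

noncomputable section

/-- The confocal quadratic form `q_t`; `q = confocalQuadric a b 0`. -/
def confocalQuadric {n : ℕ} (a : Fin n → ℝ) (b t : ℝ) (x : Fin (n + 1) → ℝ) : ℝ :=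
  ∑ i : Fin n, (x i.succ) ^ 2 / (a i - t) - (x 0) ^ 2 / (b + t)

theorem confocalQuadric_eq_of_sq_eq_mul {n : ℕ} {a : Fin n → ℝ} {b lam mu : ℝ}
    (ha : ∀ i, a i ≠ 0) (hb : b ≠ 0) (hamu : ∀ i, a i - mu ≠ 0) (hbmu : b + mu ≠ 0)
    (hmu : mu ≠ 0) {x y : Fin (n + 1) → ℝ}
    (hyi : ∀ i : Fin n, y i.succ ^ 2 = (a i - lam) / a i * x i.succ ^ 2)
    (hy0 : y 0 ^ 2 = (b + lam) / b * x 0 ^ 2) :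
    confocalQuadric a b mu y =
      lam / mu * confocalQuadric a b 0 x + (1 - lam / mu) * confocalQuadric a b mu x := by
  have hterm : ∀ i : Fin n, y i.succ ^ 2 / (a i - mu) =
      lam / mu * (x i.succ ^ 2 / (a i - 0)) + (1 - lam / mu) * (x i.succ ^ 2 / (a i - mu)) := by
    intro i
    have := ha i
    have := hamu i
    rw [hyi, sub_zero]
    field_simp
    ring
  have hterm0 : y 0 ^ 2 / (b + mu) =
      lam / mu * (x 0 ^ 2 / (b + 0)) + (1 - lam / mu) * (x 0 ^ 2 / (b + mu)) := by
    rw [hy0, add_zero]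
    field_simp
    ring
  simp only [confocalQuadric, hterm, hterm0, Finset.sum_add_distrib, ← Finset.mul_sum]
  ring

end

theorem sphere_confocal_map_same_quadrics (n : ℕ) (a : Fin n → ℝ) (b : ℝ)
    (ha : ∀ i, 0 < a i) (hb : 0 < b)
    (lam mu : ℝ) (hlam₁ : -b < lam) (hlam₂ : ∀ i, lam < a i)
    (hmu₁ : -b < mu) (hmu₂ : ∀ i, mu < a i) (hmu0 : mu ≠ 0)
    (f : (Fin (n + 1) → ℝ) →ₗ[ℝ] (Fin (n + 1) → ℝ))
    (hf0 : ∀ x : Fin (n + 1) → ℝ, f x 0 = Real.sqrt ((b + lam) / b) * x 0)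
    (hfi : ∀ (x : Fin (n + 1) → ℝ) (i : Fin n),
      f x i.succ = Real.sqrt ((a i - lam) / a i) * x i.succ)
    (x : Fin (n + 1) → ℝ)
    (hq : ∑ i : Fin n, (x i.succ) ^ 2 / a i - (x 0) ^ 2 / b = 0)
    (hqmu : ∑ i : Fin n, (x i.succ) ^ 2 / (a i - mu) - (x 0) ^ 2 / (b + mu) = 0) :
    ∑ i : Fin n, (f x i.succ) ^ 2 / (a i - mu) - (f x 0) ^ 2 / (b + mu) = 0 := by
  have hsqi : ∀ i : Fin n, f x i.succ ^ 2 = (a i - lam) / a i * x i.succ ^ 2 := fun i => by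
    rw [hfi, mul_pow, Real.sq_sqrt (div_nonneg (sub_pos.2 (hlam₂ i)).le (ha i).le)]
  have hsq0 : f x 0 ^ 2 = (b + lam) / b * x 0 ^ 2 := by
    rw [hf0, mul_pow, Real.sq_sqrt (div_nonneg (by linarith) hb.le)]
  have hq' : confocalQuadric a b 0 x = 0 := by simpa [confocalQuadric] using hq
  change confocalQuadric a b mu (f x) = 0
  rw [confocalQuadric_eq_of_sq_eq_mul (fun i => (ha i).ne') hb.ne'
    (fun i => (sub_pos.2 (hmu₂ i)).ne') (by linarith) hmu0 hsqi hsq0, hq', show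
    confocalQuadric a b mu x = 0 from hqmu]
  ring
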